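/- Every finite subset A of Z \ {0} has a valid ordering a_1,...,a_n whose reverse a_n,...,a_1 is also valid. -/

import Mathlib

/-! Two partial sums of a list differ by the sum of a block of consecutive entries, and reversing the
list reverses its blocks. So a list whose only nonempty zero-sum block is (possibly) the whole list is
valid, and so is its reverse.

Split `A` into its negative part `N` and positive part `P`. By induction on `|N| + |P|`, order `P` and
`-N` so that their nonempty prefix sums agree only for the two whole lists: from the set with the
larger sum remove an element `x` whose removal does not make the two sums equal, order the rest, and
append `x`. Put the negated reverse of the ordering of `-N` in front of the ordering of `P`. A block
inside either part has nonzero sum by sign; a block crossing the middle has as sum a prefix sum of `P`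
minus a prefix sum of `-N`. -/

/-- The partial sums a₁, a₁+a₂, ..., a₁+⋯+aₙ of the list are pairwise distinct. -/
def ValidOrdering {G : Type*} [AddCommGroup G] (l : List G) : Prop :=
  ((List.range l.length).map (fun i => (l.take (i + 1)).sum)).Nodup

/-- `l` is an ordering (an enumeration without repetition) of the finite set `A`. -/
def IsOrderingOf {G : Type*} [AddCommGroup G] (l : List G) (A : Finset G) : Prop :=
  l.Nodup ∧ ∀ a, a ∈ l ↔ a ∈ A

open List Pointwise

variable {G : Type*}

section Block

def NoProperZeroSumInfix [AddMonoid G] (l : List G) : Prop :=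
  ∀ b, b <:+: l → b ≠ [] → b ≠ l → b.sum ≠ 0

theorem NoProperZeroSumInfix.reverse [AddCommMonoid G] {l : List G} (h : NoProperZeroSumInfix l) :
    NoProperZeroSumInfix l.reverse := by
  intro b hb hbne hbl
  rw [← b.reverse_reverse, reverse_infix] at hb
  rw [← sum_reverse]
  exact h b.reverse hb (by simpa using hbne) (by rintro rfl; simp at hbl)

theorem NoProperZeroSumInfix.validOrdering [AddCommGroup G] {l : List G}
    (h : NoProperZeroSumInfix l) : ValidOrdering l := by
  refine Nodup.map_on (fun i hi j hj hij => ?_) nodup_range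
  by_contra hne
  wlog hlt : i < j generalizing i j
  · exact this j hj i hi hij.symm (Ne.symm hne) (by omega)
  rw [mem_range] at hi hj
  set b := (l.drop (i + 1)).take (j - i)
  have hsplit : l.take (j + 1) = l.take (i + 1) ++ b := by
    rw [← take_add]; congr 1; omega
  refine h b ((take_prefix _ _).isInfix.trans (drop_suffix _ _).isInfix) ?_ ?_ ?_
  · rw [← length_pos_iff]; simp only [b, length_take, length_drop]; omega
  · intro hb
    have := congrArg length hb
    simp only [b, length_take, length_drop] at this
    omega
  · simpa only [hsplit, sum_append, left_eq_add] using hij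

end Block

section Ordering

variable [AddCommGroup G]

theorem isOrderingOf_toList (A : Finset G) : IsOrderingOf A.toList A :=
  ⟨A.nodup_toList, fun _ => Finset.mem_toList⟩

theorem isOrderingOf_singleton (x : G) : IsOrderingOf [x] {x} :=
  ⟨nodup_singleton x, by simp⟩

theorem IsOrderingOf.sum_eq {l : List G} {A : Finset G} (h : IsOrderingOf l A) :
    l.sum = ∑ a ∈ A, a := by
  rw [← Finset.sum_toList]
  exact ((perm_ext_iff_of_nodup h.1 A.nodup_toList).2 fun a => by rw [h.2, Finset.mem_toList]).sum_eq

theorem IsOrderingOf.reverse {l : List G} {A : Finset G} (h : IsOrderingOf l A) :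
    IsOrderingOf l.reverse A :=
  ⟨nodup_reverse.2 h.1, fun a => by rw [mem_reverse, h.2]⟩

theorem IsOrderingOf.map_neg [DecidableEq G] {l : List G} {A : Finset G} (h : IsOrderingOf l A) :
    IsOrderingOf (l.map Neg.neg) (-A) :=
  ⟨h.1.map neg_injective, fun a => by simp [Finset.mem_neg', ← h.2, neg_eq_iff_eq_neg]⟩

theorem IsOrderingOf.append [DecidableEq G] {l₁ l₂ : List G} {A₁ A₂ : Finset G}
    (h₁ : IsOrderingOf l₁ A₁) (h₂ : IsOrderingOf l₂ A₂) (hA : Disjoint A₁ A₂) :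
    IsOrderingOf (l₁ ++ l₂) (A₁ ∪ A₂) := by
  refine ⟨h₁.1.append h₂.1 fun a ha₁ ha₂ => ?_, fun a => by simp [h₁.2, h₂.2]⟩
  exact Finset.disjoint_left.1 hA ((h₁.2 a).1 ha₁) ((h₂.2 a).1 ha₂)

theorem IsOrderingOf.concat_of_erase [DecidableEq G] {l : List G} {A : Finset G} {x : G}
    (h : IsOrderingOf l (A.erase x)) (hx : x ∈ A) : IsOrderingOf (l ++ [x]) A := by
  simpa [Finset.union_singleton, Finset.insert_erase hx] using
    h.append (isOrderingOf_singleton x) (by simp)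

end Ordering

section Separated

theorem Finset.exists_mem_ne_sum_sub [AddCommGroup G] {X : Finset G} (hX : X.Nonempty) {c : G} (hc : c ≠ 0) :
    ∃ x ∈ X, x ≠ ∑ a ∈ X, a - c := by
  by_contra! hall
  obtain ⟨x, hx⟩ := hX
  have hsingle : X = {∑ a ∈ X, a - c} :=
    Finset.eq_singleton_iff_unique_mem.2 ⟨hall x hx ▸ hx, hall⟩
  have hsum : ∑ a ∈ X, a = ∑ a ∈ X, a - c := by
    conv_lhs => rw [hsingle, Finset.sum_singleton]
  exact hc (sub_eq_self.1 hsum.symm)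

def PrefixSumsSeparated [AddMonoid G] (l₁ l₂ : List G) : Prop :=
  ∀ p₁ p₂, p₁ <+: l₁ → p₂ <+: l₂ → p₁ ≠ [] → p₂ ≠ [] → p₁.sum = p₂.sum → p₁ = l₁ ∧ p₂ = l₂

theorem PrefixSumsSeparated.symm [AddMonoid G] {l₁ l₂ : List G} (h : PrefixSumsSeparated l₁ l₂) :
    PrefixSumsSeparated l₂ l₁ := fun p₂ p₁ hp₂ hp₁ hp₂ne hp₁ne hsum =>
  (h p₁ p₂ hp₁ hp₂ hp₁ne hp₂ne hsum.symm).symm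

theorem prefixSumsSeparated_nil [AddMonoid G] (l : List G) : PrefixSumsSeparated l [] :=
  fun _ _ _ hp₂ _ hp₂ne _ => absurd (prefix_nil.1 hp₂) hp₂ne

theorem PrefixSumsSeparated.neg_reverse_suffix [AddCommGroup G] {lx ly : List G} (h : PrefixSumsSeparated lx ly)
    (s p : List G) (hs : s <:+ (ly.map Neg.neg).reverse) (hp : p <+: lx) (hsne : s ≠ [])
    (hpne : p ≠ []) (hsum : s.sum + p.sum = 0) : s = (ly.map Neg.neg).reverse ∧ p = lx := by
  have hq : s.reverse.map Neg.neg <+: ly := by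
    simpa using (reverse_prefix.2 hs).map Neg.neg
  obtain ⟨rfl, hq⟩ := h p _ hp hq hpne (by simpa using hsne)
    (by rw [← sum_neg, sum_reverse]; exact eq_neg_of_add_eq_zero_right hsum)
  exact ⟨by simp [← hq], rfl⟩

end Separated

section Ordered

variable [AddCommGroup G] [LinearOrder G] [IsOrderedAddMonoid G]

theorem List.IsPrefix.sum_lt_of_pos {p l : List G} (hp : p <+: l) (hne : p ≠ l)
    (hl : ∀ a ∈ l, 0 < a) : p.sum < l.sum := by
  obtain ⟨t, rfl⟩ := hp
  rw [sum_append]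
  refine lt_add_of_pos_right _ (sum_pos t (fun a ha => hl a (mem_append_right p ha)) ?_)
  rintro rfl
  simp at hne

theorem PrefixSumsSeparated.concat {l₁ l₂ : List G} {x : G} (h : PrefixSumsSeparated l₁ l₂)
    (hl₂ : ∀ a ∈ l₂, 0 < a) (hne : l₁.sum ≠ l₂.sum) (hle : l₂.sum ≤ l₁.sum + x) :
    PrefixSumsSeparated (l₁ ++ [x]) l₂ := by
  intro p₁ p₂ hp₁ hp₂ hp₁ne hp₂ne hsum
  rcases prefix_concat_iff.1 hp₁ with rfl | hp₁
  · refine ⟨rfl, by_contra fun hp₂l => ?_⟩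
    have := hp₂.sum_lt_of_pos hp₂l hl₂
    rw [sum_append, sum_singleton] at hsum
    exact this.not_ge (hsum ▸ hle)
  · obtain ⟨rfl, rfl⟩ := h p₁ p₂ hp₁ hp₂ hp₁ne hp₂ne hsum
    exact absurd hsum hne

theorem exists_prefixSumsSeparated_orderings (X Y : Finset G) (hX : ∀ x ∈ X, 0 < x)
    (hY : ∀ y ∈ Y, 0 < y) :
    ∃ lx ly, IsOrderingOf lx X ∧ IsOrderingOf ly Y ∧ PrefixSumsSeparated lx ly := by
  induction hn : X.card + Y.card using Nat.strong_induction_on generalizing X Y with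
  | _ n ih =>
  wlog hle : ∑ y ∈ Y, y ≤ ∑ x ∈ X, x generalizing X Y
  · obtain ⟨ly, lx, hly, hlx, h⟩ := this Y X hY hX (by omega) (le_of_not_ge hle)
    exact ⟨lx, ly, hlx, hly, h.symm⟩
  rcases Y.eq_empty_or_nonempty with rfl | hYne
  · exact ⟨X.toList, [], isOrderingOf_toList X, ⟨nodup_nil, by simp⟩, prefixSumsSeparated_nil _⟩
  have hYsum : 0 < ∑ y ∈ Y, y := Finset.sum_pos hY hYne
  have hXne : X.Nonempty := Finset.nonempty_of_sum_ne_zero (hYsum.trans_le hle).ne'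
  -- Removing `x` must not make the two sums equal.
  obtain ⟨x, hxX, hx⟩ := X.exists_mem_ne_sum_sub hXne hYsum.ne'
  have hcard : (X.erase x).card + Y.card < n := by
    rw [← hn, Finset.card_erase_of_mem hxX]
    have := hXne.card_pos
    omega
  obtain ⟨lx, ly, hlx, hly, h⟩ :=
    ih _ hcard (X.erase x) Y (fun a ha => hX a (Finset.mem_of_mem_erase ha)) hY rfl
  refine ⟨lx ++ [x], ly, hlx.concat_of_erase hxX, hly, h.concat (fun a ha => hY a ((hly.2 a).1 ha))
    ?_ ?_⟩
  · rw [hlx.sum_eq, hly.sum_eq, Finset.sum_erase_eq_sub hxX]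
    intro heq
    exact hx (by rw [← heq]; abel)
  · rwa [hlx.sum_eq, hly.sum_eq, Finset.sum_erase_eq_sub hxX, sub_add_cancel]

theorem noProperZeroSumInfix_append {u v : List G} (hu : ∀ a ∈ u, a < 0) (hv : ∀ a ∈ v, 0 < a)
    (h : ∀ s p, s <:+ u → p <+: v → s ≠ [] → p ≠ [] → s.sum + p.sum = 0 → s = u ∧ p = v) :
    NoProperZeroSumInfix (u ++ v) := by
  have hneg : ∀ b, b <:+: u → b ≠ [] → b.sum ≠ 0 := by
    intro b hb hbne
    have := sum_pos (b.map Neg.neg) (forall_mem_map.2 fun a ha => neg_pos.2 (hu a (hb.subset ha)))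
      (by simpa using hbne)
    rw [← sum_neg, neg_pos] at this
    exact this.ne
  have hpos : ∀ b, b <:+: v → b ≠ [] → b.sum ≠ 0 := fun b hb hbne =>
    (sum_pos b (fun a ha => hv a (hb.subset ha)) hbne).ne'
  intro b hb hbne hbl hsum
  rcases infix_append_iff.1 hb with hb | hb | ⟨s, p, rfl, hs, hp⟩
  · exact hneg b hb hbne hsum
  · exact hpos b hb hbne hsum
  rcases eq_or_ne s [] with rfl | hsne
  · exact hpos p hp.isInfix (by simpa using hbne) (by simpa using hsum)
  rcases eq_or_ne p [] with rfl | hpne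
  · exact hneg s hs.isInfix (by simpa using hbne) (by simpa using hsum)
  obtain ⟨rfl, rfl⟩ := h s p hs hp hsne hpne (by rwa [sum_append] at hsum)
  exact hbl rfl

theorem exists_validOrdering_and_validOrdering_reverse (A : Finset G) (hA : 0 ∉ A) :
    ∃ l, IsOrderingOf l A ∧ ValidOrdering l ∧ ValidOrdering l.reverse := by
  set N := A.filter (· < 0)
  set P := A.filter (0 < ·)
  obtain ⟨lx, ly, hlx, hly, h⟩ := exists_prefixSumsSeparated_orderings P (-N)
    (fun a ha => (Finset.mem_filter.1 ha).2)
    (fun a ha => neg_lt_zero.1 (Finset.mem_filter.1 (Finset.mem_neg'.1 ha)).2)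
  have hu : IsOrderingOf (ly.map Neg.neg).reverse N := by simpa using hly.map_neg.reverse
  have hzero : NoProperZeroSumInfix ((ly.map Neg.neg).reverse ++ lx) :=
    noProperZeroSumInfix_append (fun a ha => (Finset.mem_filter.1 ((hu.2 a).1 ha)).2)
      (fun a ha => (Finset.mem_filter.1 ((hlx.2 a).1 ha)).2) h.neg_reverse_suffix
  have hNP : N ∪ P = A := by
    rw [← Finset.filter_or]
    exact Finset.filter_true_of_mem fun a ha => (ne_of_mem_of_not_mem ha hA).lt_or_gt
  have hdisj : Disjoint N P :=
    Finset.disjoint_filter.2 fun a _ han hap => (han.trans hap).false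
  exact ⟨_, hNP ▸ hu.append hlx hdisj, hzero.validOrdering, hzero.reverse.validOrdering⟩

end Ordered

theorem graham_integers_two_sided (A : Finset ℤ) (hA : (0 : ℤ) ∉ A) :
    ∃ l : List ℤ, IsOrderingOf l A ∧ ValidOrdering l ∧ ValidOrdering l.reverse :=
  exists_validOrdering_and_validOrdering_reverse A hA
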